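/- In the setting of the previous statement (Z commutative, ι₁ : Z → A₁, ι₂ : Z → A₂ algebra maps, B = A₁^op ⊗_k A₂, I the right ideal of B generated by {ι₁(z) ⊗ 1 − 1 ⊗ ι₂(z)}), let ℓ_z and r_z denote the k-linear endomorphisms of A₁ ⊗_Z A₂ induced by a₁ ⊗ a₂ ↦ (ι₁(z)*a₁) ⊗ a₂ and a₁ ⊗ a₂ ↦ a₁ ⊗ (a₂*ι₂(z)) respectively (both are well defined on the balanced tensor product). Set (A₁ ⊗_Z A₂)^Z := {t ∈ A₁ ⊗_Z A₂ : ℓ_z(t) = r_z(t) for all z ∈ Z}. Then, under the canonical identification B/I ≅ A₁ ⊗_Z A₂, the subspace N(I)/I (where N(I) = {u ∈ B : u·I ⊆ I}) corresponds exactly to (A₁ ⊗_Z A₂)^Z. Moreover (A₁ ⊗_Z A₂)^Z is a unital associative k-algebra under the multiplication determined by (a₁ ⊗ a₂)·(a₁' ⊗ a₂') = (a₁'*a₁) ⊗ (a₂*a₂'), and the above correspondence is a k-algebra isomorphism N(I)/I ≅ (A₁ ⊗_Z A₂)^Z. -/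
import Mathlib

open MulOpposite TensorProduct

/-- In the setting of `Z` a commutative `k`-algebra, `ι₁ : Z → A₁`, `ι₂ : Z → A₂`
algebra maps, `B = A₁^op ⊗_k A₂` and `I` the right ideal of `B` generated by
`{ι₁(z) ⊗ 1 − 1 ⊗ ι₂(z)}`, identify `A₁ ⊗_Z A₂` with `B/I`.  The maps `ℓ_z` and
`r_z` induced by `a₁ ⊗ a₂ ↦ (ι₁(z)a₁) ⊗ a₂` and `a₁ ⊗ a₂ ↦ a₁ ⊗ (a₂ ι₂(z))` are the
right multiplications on `B/I` by `ι₁(z) ⊗ 1` and `1 ⊗ ι₂(z)` respectively (well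
defined since `I` is a right ideal), and
`(A₁ ⊗_Z A₂)^Z = {t : ℓ_z(t) = r_z(t) ∀ z}`.  Then, under the identification
`B/I ≅ A₁ ⊗_Z A₂`, the subspace `N(I)/I` (where `N(I) = {u : u·I ⊆ I}`) corresponds
exactly to `(A₁ ⊗_Z A₂)^Z`; moreover `(A₁ ⊗_Z A₂)^Z` is a unital associative
`k`-algebra for the multiplication `(a₁ ⊗ a₂)·(a₁' ⊗ a₂') = (a₁' a₁) ⊗ (a₂ a₂')`
(which is the multiplication descended from `B`), and the correspondence is a
`k`-algebra isomorphism `N(I)/I ≅ (A₁ ⊗_Z A₂)^Z`.  Concretely: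
(1) the image of `N(I)` in `B/I` equals the set of `Z`-invariants;
(2) `N(I)` contains `1` and is closed under multiplication;
(3) the multiplication of `B` descends to a well-defined multiplication on classes
of elements of `N(I)` modulo `I`. -/
theorem hamiltonian_reduction_balanced_tensor_invariants
    {k Z A₁ A₂ : Type*} [Field k] [CommRing Z] [Algebra k Z]
    [Ring A₁] [Algebra k A₁] [Ring A₂] [Algebra k A₂]
    (ι₁ : Z →ₐ[k] A₁) (ι₂ : Z →ₐ[k] A₂)
    (I : Submodule (A₁ᵐᵒᵖ ⊗[k] A₂)ᵐᵒᵖ (A₁ᵐᵒᵖ ⊗[k] A₂))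
    (hI : I = Submodule.span (A₁ᵐᵒᵖ ⊗[k] A₂)ᵐᵒᵖ
        {u : A₁ᵐᵒᵖ ⊗[k] A₂ | ∃ z : Z,
          u = (op (ι₁ z)) ⊗ₜ[k] (1 : A₂) - (1 : A₁ᵐᵒᵖ) ⊗ₜ[k] (ι₂ z)}) :
    ((Submodule.Quotient.mk (p := I)) ''
        {u : A₁ᵐᵒᵖ ⊗[k] A₂ | ∀ v ∈ I, u * v ∈ I}
      = {q : (A₁ᵐᵒᵖ ⊗[k] A₂) ⧸ I | ∀ z : Z,
          (op ((op (ι₁ z)) ⊗ₜ[k] (1 : A₂))) • q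
            = (op ((1 : A₁ᵐᵒᵖ) ⊗ₜ[k] (ι₂ z))) • q}) ∧
    ((1 : A₁ᵐᵒᵖ ⊗[k] A₂) ∈ {u : A₁ᵐᵒᵖ ⊗[k] A₂ | ∀ v ∈ I, u * v ∈ I}) ∧
    (∀ u ∈ {u : A₁ᵐᵒᵖ ⊗[k] A₂ | ∀ v ∈ I, u * v ∈ I},
      ∀ u' ∈ {u : A₁ᵐᵒᵖ ⊗[k] A₂ | ∀ v ∈ I, u * v ∈ I},
        u * u' ∈ {u : A₁ᵐᵒᵖ ⊗[k] A₂ | ∀ v ∈ I, u * v ∈ I}) ∧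
    (∀ u ∈ {u : A₁ᵐᵒᵖ ⊗[k] A₂ | ∀ v ∈ I, u * v ∈ I},
      ∀ w ∈ {u : A₁ᵐᵒᵖ ⊗[k] A₂ | ∀ v ∈ I, u * v ∈ I},
        (Submodule.Quotient.mk u : (A₁ᵐᵒᵖ ⊗[k] A₂) ⧸ I) = Submodule.Quotient.mk w →
          ∀ v ∈ {u : A₁ᵐᵒᵖ ⊗[k] A₂ | ∀ v ∈ I, u * v ∈ I},
            (Submodule.Quotient.mk (u * v) : (A₁ᵐᵒᵖ ⊗[k] A₂) ⧸ I)
                = Submodule.Quotient.mk (w * v) ∧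
            (Submodule.Quotient.mk (v * u) : (A₁ᵐᵒᵖ ⊗[k] A₂) ⧸ I)
                = Submodule.Quotient.mk (v * w)) := by
  -- I is closed under right multiplication
  have hmul : ∀ v ∈ I, ∀ w, v * w ∈ I := by
    intro v hv w
    have := I.smul_mem (op w) hv
    rwa [MulOpposite.smul_eq_mul_unop, unop_op] at this
  -- the generators lie in I
  have hgen : ∀ z : Z,
      (op (ι₁ z)) ⊗ₜ[k] (1 : A₂) - (1 : A₁ᵐᵒᵖ) ⊗ₜ[k] (ι₂ z) ∈ I := by
    intro z; rw [hI]; exact Submodule.subset_span ⟨z, rfl⟩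
  -- characterization of the normalizer
  have hN : ∀ u : A₁ᵐᵒᵖ ⊗[k] A₂,
      (∀ v ∈ I, u * v ∈ I) ↔
        ∀ z : Z, u * ((op (ι₁ z)) ⊗ₜ[k] (1 : A₂) - (1 : A₁ᵐᵒᵖ) ⊗ₜ[k] (ι₂ z)) ∈ I := by
    intro u
    constructor
    · exact fun h z => h _ (hgen z)
    · intro h v hv
      rw [hI] at hv
      induction hv using Submodule.span_induction with
      | mem x hx => obtain ⟨z, rfl⟩ := hx; exact h z
      | zero => simpa using I.zero_mem
      | add x y _ _ hx hy => rw [mul_add]; exact I.add_mem hx hy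
      | smul c x _ hx =>
          rw [MulOpposite.smul_eq_mul_unop, ← mul_assoc]
          exact hmul _ hx _
  refine ⟨?_, ?_, ?_, ?_⟩
  · ext q
    constructor
    · rintro ⟨u, hu, rfl⟩ z
      have : u * ((op (ι₁ z)) ⊗ₜ[k] (1 : A₂) - (1 : A₁ᵐᵒᵖ) ⊗ₜ[k] (ι₂ z)) ∈ I :=
        (hN u).1 hu z
      rw [mul_sub] at this
      have := (Submodule.Quotient.eq I).2 this
      simpa [MulOpposite.smul_eq_mul_unop, ← Submodule.Quotient.mk_smul] using this
    · intro hq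
      obtain ⟨u, rfl⟩ := Submodule.Quotient.mk_surjective I q
      refine ⟨u, ?_, rfl⟩
      rw [Set.mem_setOf_eq, hN u]
      intro z
      have := hq z
      rw [← Submodule.Quotient.mk_smul, ← Submodule.Quotient.mk_smul,
        MulOpposite.smul_eq_mul_unop, MulOpposite.smul_eq_mul_unop, unop_op, unop_op,
        Submodule.Quotient.eq] at this
      rwa [mul_sub]
  · intro v hv; simpa using hv
  · intro u hu u' hu' v hv
    rw [mul_assoc]
    exact hu _ (hu' _ hv)
  · intro u hu w hw huw v hv
    have hsub : u - w ∈ I := (Submodule.Quotient.eq I).1 huw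
    constructor
    · rw [Submodule.Quotient.eq]
      rw [← sub_mul]
      exact hmul _ hsub _
    · rw [Submodule.Quotient.eq]
      rw [← mul_sub]
      exact hv _ hsub
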